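/- There exist four hyperimmune functions g_0, g_1, g_2, g_3 and two computable stable colorings f_0, f_1 : [ℕ]² → 2 such that for every infinite f_0-homogeneous set H_0 and every infinite f_1-homogeneous set H_1, at most one of the functions g_i is hyperimmune relative to H_0 ⊕ H_1. -/

import Mathlib

/-!
The blocks `[bₖ, bₖ₊₁)` have lengths `bound bₖ + 1`, where `bound` is a limit-computable function
dominating, at every `n`, the computable functions with index at most `n`. Let `A_v` be the union
of the blocks with index `≡ v mod 4`. Every `A_v` contains blocks of arbitrarily large index, and
the principal function `g_v` of its complement jumps over each of them; so `g_v` escapes every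
computable function. The colorings read the two bits of the approximate block index mod 4 at
stage `y`; they are computable, and stable with the bits of the class of `x` as limits.
An infinite homogeneous set `H` for either coloring misses every class whose bit differs from
its colour, and the principal function of `H`, computable from `H`, then dominates `g_v` for each
missed class `v`. So the two colours determine the only `v` for which `g_v` can survive.
-/
namespace Paper

/-- Codes for oracle Turing machines. -/
inductive OCode : Type
  | zero | succ | left | right | oracle
  | pair (a b : OCode) | comp (a b : OCode) | prec (a b : OCode) | rfind' (a : OCode)

/-- Evaluation of an oracle code with oracle `O`. -/
def oeval (O : ℕ → ℕ) : OCode → ℕ →. ℕ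
  | .zero => pure 0
  | .succ => Nat.succ
  | .left => ↑fun n : ℕ => n.unpair.1
  | .right => ↑fun n : ℕ => n.unpair.2
  | .oracle => ↑fun n : ℕ => O n
  | .pair cf cg => fun n => Nat.pair <$> oeval O cf n <*> oeval O cg n
  | .comp cf cg => fun n => oeval O cg n >>= oeval O cf
  | .prec cf cg =>
    Nat.unpaired fun a n =>
      n.rec (oeval O cf a) fun y IH => do
        let i ← IH
        oeval O cg (Nat.pair a (Nat.pair y i))
  | .rfind' cf =>
    Nat.unpaired fun a m =>
      (Nat.rfind fun n => (fun m => m = 0) <$> oeval O cf (Nat.pair a (n + m))).map (· + m)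

/-- A numbering of oracle codes. -/
def encodeOCode : OCode → ℕ
  | .zero => 0
  | .succ => 1
  | .left => 2
  | .right => 3
  | .oracle => 4
  | .pair a b => 4 * Nat.pair (encodeOCode a) (encodeOCode b) + 5
  | .comp a b => 4 * Nat.pair (encodeOCode a) (encodeOCode b) + 6
  | .prec a b => 4 * Nat.pair (encodeOCode a) (encodeOCode b) + 7
  | .rfind' a => 4 * encodeOCode a + 8

/-- The Turing jump of an oracle. -/
def jump (O : ℕ → ℕ) : Set ℕ :=
  { n | ∃ c : OCode, encodeOCode c = n.unpair.1 ∧ (oeval O c n.unpair.2).Dom }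

/-- `f` is (total) recursive in the oracle `O`. -/
def RecIn (O : ℕ → ℕ) (f : ℕ → ℕ) : Prop :=
  ∃ c : OCode, ∀ n, oeval O c n = Part.some (f n)

/-- The all-zero (trivial, computable) oracle. -/
def zeroO : ℕ → ℕ := fun _ => 0

/-- Characteristic function of a set of naturals. -/
noncomputable def chi (A : Set ℕ) : ℕ → ℕ := A.indicator fun _ => 1

/-- Turing join of two oracles. -/
def joinF (f g : ℕ → ℕ) : ℕ → ℕ := fun n => if n % 2 = 0 then f (n / 2) else g (n / 2)

/-- `A` is Σ⁰₁ relative to the oracle `O` (c.e. in `O`). -/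
def SigmaIn (O : ℕ → ℕ) (A : Set ℕ) : Prop :=
  ∃ c : OCode, ∀ n, n ∈ A ↔ (oeval O c n).Dom

/-- The halting problem `∅′`. -/
noncomputable def emptyJump : Set ℕ := jump zeroO

end Paper

namespace Paper

/-- `g` is hyperimmune relative to the oracle `O`: no `O`-computable function
dominates it. -/
def HypImm (O : ℕ → ℕ) (g : ℕ → ℕ) : Prop :=
  ∀ h : ℕ → ℕ, RecIn O h → ∃ n, h n < g n

open Nat.Partrec (Code)

namespace OCode

def ofCode : Code → OCode
  | .zero => zero
  | .succ => succ
  | .left => left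
  | .right => right
  | .pair a b => pair (ofCode a) (ofCode b)
  | .comp a b => comp (ofCode a) (ofCode b)
  | .prec a b => prec (ofCode a) (ofCode b)
  | .rfind' a => rfind' (ofCode a)

/-- The oracle instruction becomes the constant `0`, matching the oracle `zeroO`. -/
def toCode : OCode → Code
  | zero => .zero
  | succ => .succ
  | left => .left
  | right => .right
  | oracle => .zero
  | pair a b => .pair (toCode a) (toCode b)
  | comp a b => .comp (toCode a) (toCode b)
  | prec a b => .prec (toCode a) (toCode b)
  | rfind' a => .rfind' (toCode a)

theorem oeval_ofCode (O : ℕ → ℕ) (c : Code) : oeval O (ofCode c) = c.eval := by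
  induction c with
  | zero | succ | left | right => rfl
  | pair a b iha ihb | comp a b iha ihb | prec a b iha ihb =>
    simp only [ofCode, oeval, Code.eval, iha, ihb]; rfl
  | rfind' a iha => simp only [ofCode, oeval, Code.eval, iha]; rfl

theorem oeval_zeroO (c : OCode) : oeval zeroO c = (toCode c).eval := by
  induction c with
  | zero | succ | left | right => rfl
  | oracle => rfl
  | pair a b iha ihb | comp a b iha ihb | prec a b iha ihb =>
    simp only [toCode, oeval, Code.eval, iha, ihb]; rfl
  | rfind' a iha => simp only [toCode, oeval, Code.eval, iha]; rfl

end OCode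

namespace RecIn

variable {O f g : ℕ → ℕ}

theorem of_computable (hf : Computable f) : RecIn O f := by
  obtain ⟨c, hc⟩ := Code.exists_code.1 (Partrec.nat_iff.1 hf.partrec)
  exact ⟨.ofCode c, fun n => by rw [OCode.oeval_ofCode, hc]; rfl⟩

theorem exists_code (hf : RecIn zeroO f) : ∃ c : Code, ∀ n, c.eval n = Part.some (f n) := by
  obtain ⟨c, hc⟩ := hf
  exact ⟨c.toCode, fun n => by rw [← OCode.oeval_zeroO, hc]⟩

theorem oracle : RecIn O O := ⟨.oracle, fun _ => rfl⟩

theorem comp (hf : RecIn O f) (hg : RecIn O g) : RecIn O fun n => f (g n) := by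
  obtain ⟨cf, hcf⟩ := hf
  obtain ⟨cg, hcg⟩ := hg
  exact ⟨.comp cf cg, fun n => by
    simp only [oeval, hcg]; exact (Part.bind_some _ _).trans (hcf _)⟩

theorem pair (hf : RecIn O f) (hg : RecIn O g) : RecIn O fun n => Nat.pair (f n) (g n) := by
  obtain ⟨cf, hcf⟩ := hf
  obtain ⟨cg, hcg⟩ := hg
  exact ⟨.pair cf cg, fun n => by simp [oeval, hcf, hcg, Seq.seq]⟩

theorem comp₂ {F : ℕ → ℕ → ℕ} (hF : Computable₂ F) (hf : RecIn O f) (hg : RecIn O g) :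
    RecIn O fun n => F (f n) (g n) := by
  have hF' : RecIn O fun m => F m.unpair.1 m.unpair.2 :=
    of_computable (hF.comp (Computable.fst.comp .unpair) (Computable.snd.comp .unpair))
  simpa using hF'.comp (hf.pair hg)

theorem prec (hf : RecIn O f) (hg : RecIn O g) :
    RecIn O fun n => Nat.rec (motive := fun _ => ℕ) (f n.unpair.1)
      (fun y IH => g (Nat.pair n.unpair.1 (Nat.pair y IH))) n.unpair.2 := by
  obtain ⟨cf, hcf⟩ := hf
  obtain ⟨cg, hcg⟩ := hg
  refine ⟨.prec cf cg, fun n => ?_⟩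
  simp only [oeval, Nat.unpaired]
  induction n.unpair.2 with
  | zero => exact hcf _
  | succ m ih => simp only [ih]; simp [hcg, Part.bind_eq_bind]

theorem find {d : ℕ → ℕ} (hd : RecIn O d) (hex : ∀ n, ∃ m, d (Nat.pair n m) = 0) :
    RecIn O fun n => Nat.find (hex n) := by
  obtain ⟨cd, hcd⟩ := hd
  refine ⟨.comp (.rfind' cd) (.pair (.pair .left .right) .zero), fun n => ?_⟩
  have hpair : oeval O (.pair (.pair .left .right) .zero) n = Part.some (Nat.pair n 0) := by
    simp [oeval, Seq.seq]; rfl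
  change oeval O (.pair (.pair .left .right) .zero) n >>= oeval O (.rfind' cd) = _
  rw [hpair]
  refine (Part.bind_some _ _).trans ?_
  simp only [oeval, Nat.unpaired, Nat.unpair_pair, add_zero, hcd]
  rw [Part.eq_some_iff]
  refine Part.mem_map_iff _ |>.2 ⟨_, Nat.mem_rfind.2 ⟨?_, fun hm => ?_⟩, rfl⟩
  · simpa using Nat.find_spec (hex n)
  · simpa using Nat.find_min (hex n) hm

theorem count {d : ℕ → ℕ} (hd : RecIn O d) : RecIn O (Nat.count fun j => d j ≠ 0) := by
  have hstep : RecIn O fun t => t.unpair.2.unpair.2 + min (d t.unpair.2.unpair.1) 1 :=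
    comp₂ (F := fun c v => c + min v 1) (Primrec₂.to_comp
        (Primrec.nat_add.comp .fst (Primrec.nat_min.comp .snd (.const 1))))
      (of_computable (Computable.snd.comp (Computable.unpair.comp (Computable.snd.comp .unpair))))
      (hd.comp (of_computable
        (Computable.fst.comp (Computable.unpair.comp (Computable.snd.comp .unpair)))))
  have hrec := (prec (of_computable (Computable.const 0)) hstep).comp
    (of_computable (Primrec₂.natPair.comp (.const 0) .id).to_comp)
  convert hrec using 1
  funext m
  simp only [Nat.unpair_pair]
  induction m with
  | zero => rfl
  | succ m ih =>
    by_cases h : d m = 0 <;> simp [Nat.count_succ, ih, h, Nat.one_le_iff_ne_zero]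

theorem nth {d : ℕ → ℕ} (hd : RecIn O d) (hinf : {j | d j ≠ 0}.Infinite) :
    RecIn O (Nat.nth fun j => d j ≠ 0) := by
  set p : ℕ → Prop := fun j => d j ≠ 0
  have hcount : ∀ n m, n + 1 - Nat.count p (m + 1) = 0 ↔ Nat.nth p n ≤ m := fun n m => by
    rw [Nat.sub_eq_zero_iff_le, Nat.succ_le_iff, Nat.lt_nth_iff_count_lt hinf, Nat.lt_succ_iff]
  have htest : RecIn O fun t => t.unpair.1 + 1 - Nat.count p (t.unpair.2 + 1) :=
    comp₂ Primrec.nat_sub.to_comp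
      (of_computable (Computable.succ.comp (Computable.fst.comp .unpair)))
      (hd.count.comp (of_computable (Computable.succ.comp (Computable.snd.comp .unpair))))
  have hex : ∀ n, ∃ m,
      (Nat.pair n m).unpair.1 + 1 - Nat.count p ((Nat.pair n m).unpair.2 + 1) = 0 :=
    fun n => ⟨Nat.nth p n, by simp [hcount]⟩
  convert htest.find hex using 1
  funext n
  rw [eq_comm, Nat.find_eq_iff]
  simp [hcount]

theorem joinF_left {a b : ℕ → ℕ} : RecIn (joinF a b) a := by
  convert oracle.comp (of_computable (Primrec.nat_mul.comp (.const 2) .id).to_comp) using 1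
  funext n
  simp [joinF]

theorem joinF_right {a b : ℕ → ℕ} : RecIn (joinF a b) b := by
  convert oracle.comp
    (of_computable (Primrec.succ.comp (Primrec.nat_mul.comp (.const 2) .id)).to_comp) using 1
  funext n
  simp [joinF, Nat.succ_div_of_not_dvd]

theorem nth_mem {H : Set ℕ} (hH : RecIn O (chi H)) (hinf : H.Infinite) :
    RecIn O (Nat.nth (· ∈ H)) := by
  have hchi : (fun j => chi H j ≠ 0) = (· ∈ H) := by
    funext j
    simp [chi]
  exact hchi ▸ hH.nth (by simpa [hchi])

end RecIn

open Filter

section Blocks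

variable {b : ℕ → ℕ} {k x : ℕ}

/-- Consecutive blocks partitioning `ℕ`; the block starting at `x` has length `b x + 1`. -/
def blockStart (b : ℕ → ℕ) (k : ℕ) : ℕ := (fun x => x + b x + 1)^[k] 0

def blockIndex (b : ℕ → ℕ) (x : ℕ) : ℕ := Nat.findGreatest (fun k => blockStart b k ≤ x) x

theorem blockStart_succ : blockStart b (k + 1) = blockStart b k + b (blockStart b k) + 1 :=
  Function.iterate_succ_apply' _ _ _

theorem blockStart_strictMono : StrictMono (blockStart b) :=
  strictMono_nat_of_lt_succ fun k => by rw [blockStart_succ]; omega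

theorem blockIndex_eq_iff :
    blockIndex b x = k ↔ blockStart b k ≤ x ∧ x < blockStart b (k + 1) := by
  constructor
  · rintro rfl
    refine ⟨Nat.findGreatest_spec (P := (blockStart b · ≤ x)) x.zero_le x.zero_le, ?_⟩
    by_contra! h
    exact (Nat.lt_succ_self _).not_ge <|
      Nat.le_findGreatest (P := (blockStart b · ≤ x)) (blockStart_strictMono.le_apply.trans h) h
  · rintro ⟨hk, hx⟩
    refine Nat.findGreatest_eq_iff.2 ⟨blockStart_strictMono.le_apply.trans hk, fun _ => hk, ?_⟩
    intro j hkj _ hj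
    exact (hx.trans_le (blockStart_strictMono.monotone hkj)).not_ge hj

theorem blockIndex_blockStart : blockIndex b (blockStart b k) = k :=
  blockIndex_eq_iff.2 ⟨le_rfl, blockStart_strictMono (Nat.lt_succ_self k)⟩

variable {α : Type*} {l : Filter α} {bs : α → ℕ → ℕ}

theorem eventually_blockStart_eq (h : ∀ n, ∀ᶠ s in l, bs s n = b n) (k : ℕ) :
    ∀ᶠ s in l, blockStart (bs s) k = blockStart b k := by
  induction k with
  | zero => exact Eventually.of_forall fun _ => rfl
  | succ k ih =>
    filter_upwards [ih, h (blockStart b k)] with s hk hb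
    rw [blockStart_succ, blockStart_succ, hk, hb]

theorem eventually_blockIndex_eq (h : ∀ n, ∀ᶠ s in l, bs s n = b n) (x : ℕ) :
    ∀ᶠ s in l, blockIndex (bs s) x = blockIndex b x := by
  obtain ⟨hlo, hhi⟩ := blockIndex_eq_iff.1 (rfl : blockIndex b x = _)
  filter_upwards [eventually_blockStart_eq h (blockIndex b x),
    eventually_blockStart_eq h (blockIndex b x + 1)] with s hs hs'
  rw [blockIndex_eq_iff, hs, hs']
  exact ⟨hlo, hhi⟩

theorem primrec_blockIndex {bs : ℕ → ℕ → ℕ} (hb : Primrec₂ bs) :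
    Primrec₂ fun s x => blockIndex (bs s) x := by
  have hstart : Primrec₂ fun s k => blockStart (bs s) k :=
    Primrec.nat_iterate Primrec.snd (Primrec.const 0) <| Primrec.succ.comp₂ <|
      Primrec.nat_add.comp₂ Primrec₂.right
        (hb.comp₂ (Primrec.fst.comp₂ Primrec₂.left) Primrec₂.right)
  exact Primrec.nat_findGreatest Primrec.snd
    (Primrec.nat_le.comp₂ (hstart.comp₂ (Primrec.fst.comp₂ Primrec₂.left) Primrec₂.right)
      (Primrec.snd.comp₂ Primrec₂.left))

end Blocks

section Bound

open Nat.Partrec.Code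

def approxBound (s n : ℕ) : ℕ :=
  ((List.range (n + 1)).map fun e => (evaln s (Denumerable.ofNat Code e) n).getD 0).sum

open scoped Classical in
/-- Dominates every computable function from its index on, but is only limit computable. -/
noncomputable def bound (n : ℕ) : ℕ :=
  ((List.range (n + 1)).map fun e => ((Denumerable.ofNat Code e).eval n).getOrElse 0).sum

open scoped Classical in
theorem eventually_evaln_getD (c : Code) (n : ℕ) :
    ∀ᶠ s in atTop, (evaln s c n).getD 0 = (c.eval n).getOrElse 0 := by
  by_cases h : (c.eval n).Dom
  · obtain ⟨k, hk⟩ := evaln_complete.1 (Part.get_mem h)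
    filter_upwards [eventually_ge_atTop k] with s hs
    rw [evaln_mono hs hk, Part.getOrElse_of_dom _ h]
    rfl
  · refine Eventually.of_forall fun s => ?_
    rw [Part.getOrElse_of_not_dom _ h]
    cases hs : evaln s c n with
    | none => rfl
    | some v => exact absurd (Part.dom_iff_mem.2 ⟨v, evaln_sound hs⟩) h

theorem eventually_approxBound_eq (n : ℕ) : ∀ᶠ s in atTop, approxBound s n = bound n := by
  have hall := (eventually_all_finset (Finset.range (n + 1))).2
    fun e _ => eventually_evaln_getD (Denumerable.ofNat Code e) n
  filter_upwards [hall] with s hs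
  exact congrArg List.sum (List.map_congr_left fun e he => hs e (by simpa using he))

open scoped Classical in
theorem le_bound {c : Code} {n v : ℕ} (hc : c.eval n = Part.some v)
    (hcn : Encodable.encode c ≤ n) : v ≤ bound n := by
  have hmem := List.mem_map_of_mem (f := fun e => ((Denumerable.ofNat Code e).eval n).getOrElse 0)
    (List.mem_range.2 (Nat.lt_succ_of_le hcn))
  simpa [hc, bound] using List.le_sum_of_mem hmem

theorem primrec_approxBound : Primrec₂ approxBound := by
  have hmap : Primrec fun p : ℕ × ℕ =>
      (List.range (p.2 + 1)).map fun e => (evaln p.1 (Denumerable.ofNat Code e) p.2).getD 0 :=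
    Primrec.list_map (Primrec.list_range.comp (Primrec.succ.comp Primrec.snd)) <|
      Primrec.option_getD.comp₂ (primrec_evaln.comp₂ <| Primrec₂.pair.comp₂
        (Primrec₂.pair.comp₂ (Primrec.fst.comp₂ Primrec₂.left)
          ((Primrec.ofNat Code).comp₂ Primrec₂.right))
        (Primrec.snd.comp₂ Primrec₂.left)) (Primrec₂.const 0)
  exact (Primrec.list_foldr hmap (Primrec.const 0)
    (Primrec.nat_add.comp₂ (Primrec.fst.comp₂ Primrec₂.right)
      (Primrec.snd.comp₂ Primrec₂.right)))

end Bound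

/-- `x` lies in the part `A_v` of the Δ⁰₂ partition iff `blockClass x = v`. -/
noncomputable def blockClass (x : ℕ) : ℕ := blockIndex bound x % 4

def approxBlockClass (s x : ℕ) : ℕ := blockIndex (approxBound s) x % 4

noncomputable def principalCompl (v : Fin 4) : ℕ → ℕ := Nat.nth fun x => blockClass x ≠ v

def highBitColoring (x y : ℕ) : Fin 2 := Fin.ofNat 2 (approxBlockClass y x / 2)

def lowBitColoring (x y : ℕ) : Fin 2 := Fin.ofNat 2 (approxBlockClass y x)

theorem eventually_approxBlockClass_eq (x : ℕ) :
    ∀ᶠ s in atTop, approxBlockClass s x = blockClass x :=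
  (eventually_blockIndex_eq eventually_approxBound_eq x).mono fun _ h => by
    rw [approxBlockClass, blockClass, h]

theorem eventually_highBitColoring (x : ℕ) :
    ∀ᶠ y in atTop, highBitColoring x y = Fin.ofNat 2 (blockClass x / 2) :=
  (eventually_approxBlockClass_eq x).mono fun _ h => by rw [highBitColoring, h]

theorem eventually_lowBitColoring (x : ℕ) :
    ∀ᶠ y in atTop, lowBitColoring x y = Fin.ofNat 2 (blockClass x) :=
  (eventually_approxBlockClass_eq x).mono fun _ h => by rw [lowBitColoring, h]

theorem primrec_approxBlockClass : Primrec₂ approxBlockClass :=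
  Primrec.nat_mod.comp₂ (primrec_blockIndex primrec_approxBound) (Primrec₂.const 4)

theorem recIn_highBitColoring :
    RecIn zeroO fun m => (highBitColoring m.unpair.1 m.unpair.2 : ℕ) := by
  refine .of_computable (Primrec.to_comp ?_)
  simp only [highBitColoring, Fin.val_ofNat]
  exact Primrec.nat_mod.comp (Primrec.nat_div.comp (primrec_approxBlockClass.comp
    (Primrec.snd.comp .unpair) (Primrec.fst.comp .unpair)) (.const 2)) (.const 2)

theorem recIn_lowBitColoring :
    RecIn zeroO fun m => (lowBitColoring m.unpair.1 m.unpair.2 : ℕ) := by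
  refine .of_computable (Primrec.to_comp ?_)
  simp only [lowBitColoring, Fin.val_ofNat]
  exact Primrec.nat_mod.comp (primrec_approxBlockClass.comp
    (Primrec.snd.comp .unpair) (Primrec.fst.comp .unpair)) (.const 2)

theorem infinite_setOf_blockClass_ne (v : ℕ) : {x | blockClass x ≠ v}.Infinite := by
  refine Set.infinite_of_forall_exists_gt fun a => ⟨blockStart bound (4 * a + v + 1), ?_, ?_⟩
  · simp only [Set.mem_ofPred_eq, blockClass, blockIndex_blockStart]
    omega
  · exact lt_of_lt_of_le (by omega) (blockStart_strictMono.le_apply)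

theorem le_nth_of_forall_not {p : ℕ → Prop} [DecidablePred p] (hp : {x | p x}.Infinite)
    {a b : ℕ} (hab : a ≤ b) (h : ∀ x, a ≤ x → x < b → ¬p x) : b ≤ Nat.nth p a := by
  rw [← Nat.count_le_iff_le_nth hp, ← Nat.add_sub_of_le hab, Nat.count_add,
    Nat.count_of_forall_not fun x hx => h (a + x) (by omega) (by omega), add_zero]
  exact Nat.count_le _

theorem blockStart_succ_le_principalCompl {k : ℕ} (v : Fin 4) (hk : k % 4 = v) :
    blockStart bound (k + 1) ≤ principalCompl v (blockStart bound k) :=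
  le_nth_of_forall_not (infinite_setOf_blockClass_ne v) (blockStart_strictMono.monotone k.le_succ)
    fun x hlo hhi => by simp [blockClass, blockIndex_eq_iff.2 ⟨hlo, hhi⟩, hk]

theorem hypImm_principalCompl (v : Fin 4) : HypImm zeroO (principalCompl v) := by
  intro h hh
  obtain ⟨c, hc⟩ := hh.exists_code
  -- block `k` lies in `A_v`, and `bound` dominates `h` from the index of `c` on
  set k := 4 * Encodable.encode c + v
  refine ⟨blockStart bound k, ?_⟩
  have hdom : h (blockStart bound k) ≤ bound (blockStart bound k) :=
    le_bound (hc _) ((by omega : Encodable.encode c ≤ k).trans (blockStart_strictMono.le_apply))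
  have hgap := blockStart_succ_le_principalCompl v (k := k) (by omega)
  rw [blockStart_succ] at hgap
  omega

theorem not_hypImm_of_le {O g h : ℕ → ℕ} (hh : RecIn O h) (hle : ∀ n, g n ≤ h n) :
    ¬HypImm O g := fun hg =>
  let ⟨n, hn⟩ := hg h hh
  (hle n).not_gt hn

theorem exists_mem_blockClass_eq_of_hypImm {O : ℕ → ℕ} {H : Set ℕ} (hH : H.Infinite)
    (hrec : RecIn O (chi H)) {v : Fin 4} (hv : HypImm O (principalCompl v)) :
    ∃ x ∈ H, blockClass x = v := by
  by_contra! havoid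
  refine not_hypImm_of_le (hrec.nth_mem hH) (fun n => ?_) hv
  exact Nat.nth_le_of_strictMonoOn_of_mapsTo _
    (fun n _ => havoid _ (Nat.nth_mem_of_infinite hH n)) ((Nat.nth_strictMono hH).strictMonoOn _)

theorem eq_of_homogeneous_of_eventually_eq {α : Type*} {f : ℕ → ℕ → α} {H : Set ℕ}
    (hH : H.Infinite) {c a : α} (hc : ∀ x ∈ H, ∀ y ∈ H, x < y → f x y = c) {x : ℕ}
    (hx : x ∈ H) (ha : ∀ᶠ y in atTop, f x y = a) : a = c := by
  obtain ⟨N, hN⟩ := eventually_atTop.1 ha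
  obtain ⟨y, hy, hxy⟩ := hH.exists_gt (max x N)
  rw [max_lt_iff] at hxy
  rw [← hN y hxy.2.le, hc x hx y hy hxy.1]

/-- There are four hyperimmune functions `g₀, …, g₃` and two computable stable colorings
`f₀, f₁ : [ℕ]² → 2` such that for all infinite homogeneous sets `H₀` for `f₀` and `H₁`
for `f₁`, at most one `gᵢ` is hyperimmune relative to `H₀ ⊕ H₁`. -/
theorem product_hyperimmunity_failure :
    ∃ g : Fin 4 → ℕ → ℕ, ∃ f0 f1 : ℕ → ℕ → Fin 2,
      (∀ i : Fin 4, HypImm zeroO (g i)) ∧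
      RecIn zeroO (fun m => (f0 m.unpair.1 m.unpair.2 : ℕ)) ∧
      RecIn zeroO (fun m => (f1 m.unpair.1 m.unpair.2 : ℕ)) ∧
      (∀ x : ℕ, ∃ c : Fin 2, ∀ᶠ y in Filter.atTop, f0 x y = c) ∧
      (∀ x : ℕ, ∃ c : Fin 2, ∀ᶠ y in Filter.atTop, f1 x y = c) ∧
      ∀ H0 H1 : Set ℕ, H0.Infinite → H1.Infinite →
        (∃ c : Fin 2, ∀ x ∈ H0, ∀ y ∈ H0, x < y → f0 x y = c) →
        (∃ c : Fin 2, ∀ x ∈ H1, ∀ y ∈ H1, x < y → f1 x y = c) →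
        ∀ i j : Fin 4, HypImm (joinF (chi H0) (chi H1)) (g i) →
          HypImm (joinF (chi H0) (chi H1)) (g j) → i = j := by
  refine ⟨principalCompl, highBitColoring, lowBitColoring, hypImm_principalCompl,
    recIn_highBitColoring, recIn_lowBitColoring, fun x => ⟨_, eventually_highBitColoring x⟩,
    fun x => ⟨_, eventually_lowBitColoring x⟩, ?_⟩
  rintro H0 H1 hH0 hH1 ⟨c0, hc0⟩ ⟨c1, hc1⟩ i j hi hj
  have bits : ∀ v : Fin 4, HypImm (joinF (chi H0) (chi H1)) (principalCompl v) →
      v.val / 2 % 2 = c0.val ∧ v.val % 2 = c1.val := by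
    intro v hv
    obtain ⟨x, hx, hxv⟩ := exists_mem_blockClass_eq_of_hypImm hH0 RecIn.joinF_left hv
    obtain ⟨y, hy, hyv⟩ := exists_mem_blockClass_eq_of_hypImm hH1 RecIn.joinF_right hv
    rw [← eq_of_homogeneous_of_eventually_eq hH0 hc0 hx (eventually_highBitColoring x),
      ← eq_of_homogeneous_of_eventually_eq hH1 hc1 hy (eventually_lowBitColoring y),
      Fin.val_ofNat, Fin.val_ofNat, hxv, hyv]
    exact ⟨rfl, rfl⟩
  have hi' := bits i hi
  have hj' := bits j hj
  exact Fin.ext (by omega)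

end Paper
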